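/- arXiv:1501.05071 — 6 statements merged into one kernel-verified Lean document; each statement's English description precedes it below -/
import Mathlib

section
/- Let π and q be probability vectors with π_i > 0 and q_i > 0 for all i, and suppose π ≠ q (the Forecaster offers probabilistic odds based on an incorrect probability estimate). Let X_1, X_2, ... be i.i.d. with P(X_k = i) = π_i and let the Client bet proportions p = π of their entire wealth at each play, so W_n = W_0 ∏_{k=1}^n (π_{X_k}/q_{X_k}) with W_0 > 0. Then the growth rate ∑_i π_i log(π_i/q_i) is strictly positive, and W_n → ∞ almost surely: the Client almost surely bankrupts the Forecaster. -/
open Finset MeasureTheory ProbabilityTheory Filter Topology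

/-!
Since `log W_n = log W_0 + ∑_{k<n} log (π_{X_k} / q_{X_k})` is a sum of i.i.d. bounded terms,
the strong law of large numbers gives `log W_n / n → ∑ π_i log (π_i / q_i)` almost surely.
This growth rate is the Kullback–Leibler divergence of `π` from `q`; it is positive by Gibbs'
inequality, in the form `p log (p / q) - (p - q) = q · klFun (p / q) ≥ 0` with equality only at
`p = q`, summed over `i` (the terms `p - q` cancel because both vectors have total mass one).
Hence `log W_n → ∞`.
-/

open Real InformationTheory in
lemma mul_log_div_sub_sub_eq_mul_klFun {p q : ℝ} (hq : 0 < q) :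
    p * log (p / q) - (p - q) = q * klFun (p / q) := by
  rw [klFun_apply]
  field_simp
  ring

open Real InformationTheory in
theorem sum_mul_log_div_pos {ι : Type*} [Fintype ι] {p q : ι → ℝ} (hp : ∀ i, 0 ≤ p i)
    (hq : ∀ i, 0 < q i) (hsum : ∑ i, p i = ∑ i, q i) (hne : p ≠ q) :
    0 < ∑ i, p i * log (p i / q i) := by
  obtain ⟨j, hj⟩ := Function.ne_iff.mp hne
  have hratio : ∀ i, 0 ≤ p i / q i := fun i => div_nonneg (hp i) (hq i).le
  calc 0 < ∑ i, q i * klFun (p i / q i) := by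
        refine sum_pos' (fun i _ => mul_nonneg (hq i).le (klFun_nonneg (hratio i)))
          ⟨j, mem_univ j, ?_⟩
        refine mul_pos (hq j) ((klFun_nonneg (hratio j)).lt_of_ne' ?_)
        rwa [Ne, klFun_eq_zero_iff (hratio j), div_eq_one_iff_eq (hq j).ne']
    _ = ∑ i, p i * log (p i / q i) - ∑ i, (p i - q i) := by
        rw [← sum_sub_distrib]
        exact sum_congr rfl fun i _ => (mul_log_div_sub_sub_eq_mul_klFun (hq i)).symm
    _ = ∑ i, p i * log (p i / q i) := by rw [sum_sub_distrib, hsum, sub_self, sub_zero]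

theorem identDistrib_of_measure_preimage_singleton {Ω Ω' ι : Type*} [MeasurableSpace Ω]
    [MeasurableSpace Ω'] [MeasurableSpace ι] [Countable ι] [MeasurableSingletonClass ι]
    {μ : Measure Ω} {ν : Measure Ω'} {X : Ω → ι} {Y : Ω' → ι} (hX : Measurable X)
    (hY : Measurable Y) (h : ∀ i, μ {ω | X ω = i} = ν {ω | Y ω = i}) :
    IdentDistrib X Y μ ν where
  aemeasurable_fst := hX.aemeasurable
  aemeasurable_snd := hY.aemeasurable
  map_eq := Measure.ext_of_singleton fun i => by
    rw [Measure.map_apply hX (measurableSet_singleton i),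
      Measure.map_apply hY (measurableSet_singleton i)]
    exact h i

theorem integral_comp_eq_sum_mul {Ω ι : Type*} [MeasurableSpace Ω] [Fintype ι]
    [MeasurableSpace ι] [MeasurableSingletonClass ι] {μ : Measure Ω} [IsFiniteMeasure μ]
    {X : Ω → ι} (hX : Measurable X) {π : ι → ℝ} (hπ : ∀ i, 0 ≤ π i)
    (hdist : ∀ i, μ {ω | X ω = i} = ENNReal.ofReal (π i)) (f : ι → ℝ) :
    ∫ ω, f (X ω) ∂μ = ∑ i, π i * f i := by
  rw [← integral_map hX.aemeasurable (measurable_of_finite f).aestronglyMeasurable,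
    integral_fintype Integrable.of_finite]
  refine sum_congr rfl fun i _ => ?_
  rw [measureReal_def, Measure.map_apply hX (measurableSet_singleton i), smul_eq_mul]
  change (μ {ω | X ω = i}).toReal * f i = _
  rw [hdist i, ENNReal.toReal_ofReal (hπ i)]

theorem ae_tendsto_sum_comp_div_of_iIndepFun {Ω ι : Type*} [MeasurableSpace Ω]
    [MeasurableSpace ι] {μ : Measure Ω} {X : ℕ → Ω → ι} (hindep : iIndepFun X μ)
    (hident : ∀ k, IdentDistrib (X k) (X 0) μ μ) {f : ι → ℝ} (hf : Measurable f)
    (hint : Integrable (fun ω => f (X 0 ω)) μ) :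
    ∀ᵐ ω ∂μ, Tendsto (fun n : ℕ => (∑ k ∈ range n, f (X k ω)) / n) atTop
      (𝓝 (∫ ω, f (X 0 ω) ∂μ)) :=
  strong_law_ae_real (fun k ω => f (X k ω)) hint
    (fun _ _ hij => (hindep.indepFun hij).comp hf hf) fun k => (hident k).comp hf

theorem tendsto_atTop_of_tendsto_div_natCast {u : ℕ → ℝ} {c : ℝ} (hc : 0 < c)
    (hu : Tendsto (fun n : ℕ => u n / n) atTop (𝓝 c)) : Tendsto u atTop atTop := by
  refine (hu.pos_mul_atTop hc tendsto_natCast_atTop_atTop).congr' ?_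
  filter_upwards [eventually_ne_atTop 0] with n hn
  exact div_mul_cancel₀ _ (Nat.cast_ne_zero.mpr hn)

theorem ae_tendsto_sum_comp_div_of_iIndepFun_of_fintype {Ω ι : Type*} [MeasurableSpace Ω]
    [Fintype ι] [MeasurableSpace ι] [MeasurableSingletonClass ι] {μ : Measure Ω}
    [IsFiniteMeasure μ] {X : ℕ → Ω → ι} (hX : ∀ k, Measurable (X k))
    (hindep : iIndepFun X μ) {π : ι → ℝ} (hπ : ∀ i, 0 ≤ π i)
    (hdist : ∀ k i, μ {ω | X k ω = i} = ENNReal.ofReal (π i)) (f : ι → ℝ) :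
    ∀ᵐ ω ∂μ, Tendsto (fun n : ℕ => (∑ k ∈ range n, f (X k ω)) / n) atTop
      (𝓝 (∑ i, π i * f i)) := by
  have hident : ∀ k, IdentDistrib (X k) (X 0) μ μ := fun k =>
    identDistrib_of_measure_preimage_singleton (hX k) (hX 0) fun i => by rw [hdist k i, hdist 0 i]
  have hint : Integrable (fun ω => f (X 0 ω)) μ := Integrable.of_finite.comp_measurable (hX 0)
  rw [← integral_comp_eq_sum_mul (hX 0) hπ (hdist 0) f]
  exact ae_tendsto_sum_comp_div_of_iIndepFun hindep hident (measurable_of_finite f) hint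

/-- If the Forecaster offers probabilistic odds `q` (`∑ q_i = 1`) based on
an incorrect estimate (`q ≠ π`), and the Client bets their entire wealth in the Kelly
proportions `p = π`, so `W_n = W_0 ∏_{k<n} π_{X_k}/q_{X_k}` with the `X_k` i.i.d.
according to `π`, then the growth rate `∑ π_i log(π_i/q_i)` is strictly positive and
`W_n → ∞` almost surely: the Client almost surely bankrupts the Forecaster. -/
theorem kelly_bankrupts_wrong_probabilistic_odds (m : ℕ) (Ω : Type*) [MeasurableSpace Ω]
    (μ : Measure Ω) [IsProbabilityMeasure μ]
    (π q : Fin m → ℝ)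
    (hπ : ∀ i, 0 < π i) (hπsum : ∑ i, π i = 1)
    (hq : ∀ i, 0 < q i) (hqsum : ∑ i, q i = 1)
    (hne : π ≠ q)
    (X : ℕ → Ω → Fin m) (hmeas : ∀ k, Measurable (X k))
    (hindep : iIndepFun X μ)
    (hdist : ∀ k i, μ {ω | X k ω = i} = ENNReal.ofReal (π i))
    (W₀ : ℝ) (hW₀ : 0 < W₀)
    (W : ℕ → Ω → ℝ)
    (hW : ∀ n ω, W n ω = W₀ * ∏ k ∈ Finset.range n, π (X k ω) / q (X k ω)) :
    0 < ∑ i, π i * Real.log (π i / q i) ∧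
    ∀ᵐ ω ∂μ, Tendsto (fun n : ℕ => W n ω) atTop atTop := by
  have hrate := sum_mul_log_div_pos (fun i => (hπ i).le) hq (hπsum.trans hqsum.symm) hne
  refine ⟨hrate, ?_⟩
  let f : Fin m → ℝ := fun i => Real.log (π i / q i)
  have hslln := ae_tendsto_sum_comp_div_of_iIndepFun_of_fintype hmeas hindep
    (fun i => (hπ i).le) hdist f
  filter_upwards [hslln] with ω hω
  have hW_exp : ∀ n, W n ω = W₀ * Real.exp (∑ k ∈ range n, f (X k ω)) := fun n => by
    rw [hW, Real.exp_sum]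
    simp only [f, Real.exp_log (div_pos (hπ _) (hq _))]
  simp only [hW_exp]
  exact (Real.tendsto_exp_atTop.comp
    (tendsto_atTop_of_tendsto_div_natCast hrate hω)).const_mul_atTop hW₀
end

section
/- Let x ≤ n be natural numbers and q, q' > 0. Then ∫_0^1 max(π/q, (1−π)/q') · π^x (1−π)^{n−x} dπ = (1/q') β_{q/(q+q')}(x+1, n−x+2) + (1/q) β_{q'/(q+q')}(n−x+1, x+2), where β_t(a,b) = ∫_0^t s^{a−1}(1−s)^{b−1} ds is the incomplete beta function. Consequently the zero-expected-pay-out constraint ∫_0^1 (max(π/q,(1−π)/q') − 1) π^x(1−π)^{n−x} dπ = 0 is equivalent to (1/q') β_{q/(q+q')}(x+1, n−x+2) + (1/q) β_{q'/(q+q')}(n−x+1, x+2) = β(x+1, n−x+1), where β(a,b) = β_1(a,b). -/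
open intervalIntegral

/-- The incomplete beta function `β_t(a, b) = ∫_0^t s^(a−1) (1−s)^(b−1) ds`
for positive natural parameters `a`, `b`. -/
noncomputable def incBeta (t : ℝ) (a b : ℕ) : ℝ :=
  ∫ s in (0 : ℝ)..t, s ^ (a - 1) * (1 - s) ^ (b - 1)

/-! The Client's best bet switches from `E′` to `E` at `π = q/(q+q')`, so the integral splits
there into two incomplete beta integrals; the one on `[q/(q+q'), 1]` becomes an integral over
`[0, q'/(q+q')]` under the reflection `π ↦ 1 - π`. -/

theorem incBeta_add_one (t : ℝ) (a b : ℕ) :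
    incBeta t (a + 1) (b + 1) = ∫ s in (0 : ℝ)..t, s ^ a * (1 - s) ^ b := by
  simp [incBeta]

theorem incBeta_one_sub (t : ℝ) (a b : ℕ) :
    incBeta (1 - t) (a + 1) (b + 1) = ∫ s in t..1, s ^ b * (1 - s) ^ a := by
  have hreflect := integral_comp_sub_left (fun s => s ^ a * (1 - s) ^ b) (a := t) (b := 1) 1
  simp only [sub_sub_cancel, sub_self] at hreflect
  rw [incBeta_add_one, ← hreflect]
  exact integral_congr fun s _ => mul_comm _ _

theorem div_le_one_sub_div_iff {q q' : ℝ} (hq : 0 < q) (hq' : 0 < q') (π : ℝ) :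
    π / q ≤ (1 - π) / q' ↔ π ≤ q / (q + q') := by
  rw [div_le_div_iff₀ hq hq', le_div_iff₀ (add_pos hq hq')]
  constructor <;> intro h <;> linarith

theorem one_sub_div_le_div_iff {q q' : ℝ} (hq : 0 < q) (hq' : 0 < q') (π : ℝ) :
    (1 - π) / q' ≤ π / q ↔ q / (q + q') ≤ π := by
  rw [div_le_div_iff₀ hq' hq, div_le_iff₀ (add_pos hq hq')]
  constructor <;> intro h <;> linarith

theorem integral_max_div_mul {q q' : ℝ} (hq : 0 < q) (hq' : 0 < q') {w : ℝ → ℝ}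
    (hw : Continuous w) :
    ∫ π in (0 : ℝ)..1, max (π / q) ((1 - π) / q') * w π
      = 1 / q' * (∫ π in (0 : ℝ)..q / (q + q'), (1 - π) * w π)
        + 1 / q * ∫ π in q / (q + q')..1, π * w π := by
  set c := q / (q + q')
  have hc0 : 0 ≤ c := by positivity
  have hc1 : c ≤ 1 := div_le_one_of_le₀ (by linarith) (by positivity)
  have hcont : Continuous fun π => max (π / q) ((1 - π) / q') * w π := by fun_prop
  rw [← integral_add_adjacent_intervals (b := c) (hcont.intervalIntegrable _ _)
    (hcont.intervalIntegrable _ _), ← integral_const_mul, ← integral_const_mul]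
  congr 1 <;> refine integral_congr fun π hπ => ?_
  · rw [Set.uIcc_of_le hc0] at hπ
    rw [max_eq_right ((div_le_one_sub_div_iff hq hq' π).2 hπ.2)]
    ring
  · rw [Set.uIcc_of_le hc1] at hπ
    rw [max_eq_left ((one_sub_div_le_div_iff hq hq' π).2 hπ.1)]
    ring

theorem frequency_model_constraint_general (x n : ℕ)
    (q q' : ℝ) (hq : 0 < q) (hq' : 0 < q') :
    ((∫ π in (0 : ℝ)..1, max (π / q) ((1 - π) / q') * (π ^ x * (1 - π) ^ (n - x)))
        = (1 / q') * incBeta (q / (q + q')) (x + 1) (n - x + 2)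
          + (1 / q) * incBeta (q' / (q + q')) (n - x + 1) (x + 2)) ∧
    ((∫ π in (0 : ℝ)..1, (max (π / q) ((1 - π) / q') - 1) * (π ^ x * (1 - π) ^ (n - x))) = 0
        ↔ (1 / q') * incBeta (q / (q + q')) (x + 1) (n - x + 2)
            + (1 / q) * incBeta (q' / (q + q')) (n - x + 1) (x + 2)
          = incBeta 1 (x + 1) (n - x + 1)) := by
  have hw : Continuous fun π : ℝ => π ^ x * (1 - π) ^ (n - x) := by fun_prop
  have hsplit : (∫ π in (0 : ℝ)..1, max (π / q) ((1 - π) / q') * (π ^ x * (1 - π) ^ (n - x)))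
      = (1 / q') * incBeta (q / (q + q')) (x + 1) (n - x + 2)
        + (1 / q) * incBeta (q' / (q + q')) (n - x + 1) (x + 2) := by
    have hreflect : q' / (q + q') = 1 - q / (q + q') := by field_simp; ring
    rw [integral_max_div_mul hq hq' hw, hreflect, incBeta_one_sub, incBeta_add_one]
    congr 2 <;> refine integral_congr fun π _ => ?_ <;> ring
  refine ⟨hsplit, ?_⟩
  have hcont : Continuous fun π => max (π / q) ((1 - π) / q') * (π ^ x * (1 - π) ^ (n - x)) := by
    fun_prop
  simp only [sub_mul, one_mul]
  rw [integral_sub (hcont.intervalIntegrable _ _) (hw.intervalIntegrable _ _), hsplit,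
    incBeta_add_one 1 x (n - x), sub_eq_zero]

/-- In the frequency model with posterior weight `π^x (1−π)^(n−x)`, the
expected optimal pay-out integral evaluates in terms of incomplete beta functions:
`∫_0^1 max(π/q, (1−π)/q') π^x (1−π)^(n−x) dπ
  = (1/q') β_{q/(q+q')}(x+1, n−x+2) + (1/q) β_{q'/(q+q')}(n−x+1, x+2)`,
and hence the zero-expected-pay-out constraint is equivalent to
`(1/q') β_{q/(q+q')}(x+1, n−x+2) + (1/q) β_{q'/(q+q')}(n−x+1, x+2) = β(x+1, n−x+1)`. -/
theorem frequency_model_constraint (x n : ℕ) (hxn : x ≤ n)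
    (q q' : ℝ) (hq : 0 < q) (hq' : 0 < q') :
    ((∫ π in (0 : ℝ)..1, max (π / q) ((1 - π) / q') * (π ^ x * (1 - π) ^ (n - x)))
        = (1 / q') * incBeta (q / (q + q')) (x + 1) (n - x + 2)
          + (1 / q) * incBeta (q' / (q + q')) (n - x + 1) (x + 2)) ∧
    ((∫ π in (0 : ℝ)..1, (max (π / q) ((1 - π) / q') - 1) * (π ^ x * (1 - π) ^ (n - x))) = 0
        ↔ (1 / q') * incBeta (q / (q + q')) (x + 1) (n - x + 2)
            + (1 / q) * incBeta (q' / (q + q')) (n - x + 1) (x + 2)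
          = incBeta 1 (x + 1) (n - x + 1)) :=
  frequency_model_constraint_general x n q q' hq hq'
end

section
/- For all natural numbers a and b, ∫_0^1 t^a (1−t)^b log(t) dt = B(a+1, b+1) · (H_a − H_{a+b+1}), where B is the beta function and H_k = ∑_{i=1}^k 1/i denotes the k-th harmonic number (H_0 = 0). -/
open Real MeasureTheory intervalIntegral Set

lemma aux_integrable (a b : ℕ) :
    IntervalIntegrable (fun t : ℝ => t ^ a * (1 - t) ^ b * Real.log t) volume 0 1 := by
  have hg : IntervalIntegrable (fun t : ℝ => 2 * t ^ (-(1/2) : ℝ)) volume 0 1 :=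
    (intervalIntegrable_rpow' (by norm_num)).const_mul 2
  rw [intervalIntegrable_iff, uIoc_of_le zero_le_one] at hg ⊢
  refine hg.mono' ?_ ?_
  · exact (((measurable_id.pow_const a).mul
      ((measurable_const.sub measurable_id).pow_const b)).mul
      Real.measurable_log).aestronglyMeasurable
  · filter_upwards [ae_restrict_mem measurableSet_Ioc] with t ht
    obtain ⟨ht0, ht1⟩ := ht
    have h1 : Real.log (t ^ (-(1/2) : ℝ)) ≤ t ^ (-(1/2) : ℝ) - 1 :=
      Real.log_le_sub_one_of_pos (Real.rpow_pos_of_pos ht0 _)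
    rw [Real.log_rpow ht0] at h1
    have hlog : -Real.log t ≤ 2 * t ^ (-(1/2) : ℝ) := by nlinarith
    have hlognp : Real.log t ≤ 0 := Real.log_nonpos ht0.le ht1
    have hta : t ^ a ≤ 1 := pow_le_one₀ ht0.le ht1
    have htb : (1 - t) ^ b ≤ 1 := pow_le_one₀ (by linarith) (by linarith)
    have h0a : (0:ℝ) ≤ t ^ a := pow_nonneg ht0.le a
    have h0b : (0:ℝ) ≤ (1 - t) ^ b := pow_nonneg (by linarith) b
    have : ‖t ^ a * (1 - t) ^ b * Real.log t‖ = t ^ a * (1 - t) ^ b * (-Real.log t) := by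
      rw [Real.norm_eq_abs, abs_mul, abs_of_nonneg (by positivity : (0:ℝ) ≤ t ^ a * (1-t)^b),
        abs_of_nonpos hlognp]
    rw [this]
    have hprod : t ^ a * (1 - t) ^ b ≤ 1 := mul_le_one₀ hta h0b htb
    have := mul_le_mul_of_nonneg_right hprod (by linarith : (0:ℝ) ≤ -Real.log t)
    linarith

lemma int_pow_log (n : ℕ) :
    ∫ t in (0:ℝ)..1, t ^ n * Real.log t = -(1 / ((n:ℝ) + 1) ^ 2) := by
  have hF : Continuous (fun t : ℝ =>
      t ^ n * (t * Real.log t) / ((n:ℝ)+1) - t ^ (n+1) / ((n:ℝ)+1)^2) := by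
    have := Real.continuous_mul_log
    fun_prop
  have hderiv : ∀ x ∈ Ioo (0:ℝ) 1, HasDerivAt (fun t : ℝ =>
      t ^ n * (t * Real.log t) / ((n:ℝ)+1) - t ^ (n+1) / ((n:ℝ)+1)^2)
      (x ^ n * Real.log x) x := by
    intro x hx
    have hne : ((n:ℝ)+1) ≠ 0 := by positivity
    have h1 : HasDerivAt (fun t : ℝ => t ^ (n+1)) (((n:ℝ)+1) * x ^ n) x := by
      simpa using hasDerivAt_pow (n+1) x
    have h2 : HasDerivAt (fun t : ℝ => t ^ (n+1) * Real.log t)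
        (((n:ℝ)+1) * x ^ n * Real.log x + x ^ (n+1) * x⁻¹) x :=
      h1.mul (Real.hasDerivAt_log hx.1.ne')
    have h3 : HasDerivAt (fun t : ℝ =>
        t ^ n * (t * Real.log t) / ((n:ℝ)+1) - t ^ (n+1) / ((n:ℝ)+1)^2)
        ((((n:ℝ)+1) * x ^ n * Real.log x + x ^ (n+1) * x⁻¹) / ((n:ℝ)+1)
          - (((n:ℝ)+1) * x ^ n) / ((n:ℝ)+1)^2) x := by
      refine HasDerivAt.sub ?_ (h1.div_const _)
      have : (fun t : ℝ => t ^ n * (t * Real.log t) / ((n:ℝ)+1))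
          = fun t : ℝ => t ^ (n+1) * Real.log t / ((n:ℝ)+1) := by
        funext t; ring
      rw [this]; exact h2.div_const _
    convert h3 using 1
    field_simp [hx.1.ne']
    ring
  have := intervalIntegral.integral_eq_sub_of_hasDerivAt_of_le zero_le_one
    hF.continuousOn hderiv (by simpa using aux_integrable n 0)
  rw [this]
  simp

lemma beta_val (a b : ℕ) :
    ∫ t in (0:ℝ)..1, t ^ a * (1 - t) ^ b
      = (a.factorial : ℝ) * b.factorial / (a + b + 1).factorial := by
  induction b generalizing a with
  | zero =>
    have h : (a.factorial : ℝ) ≠ 0 := Nat.cast_ne_zero.2 a.factorial_pos.ne'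
    simp [integral_pow, Nat.factorial_succ]
    field_simp
  | succ b ih =>
    have hsplit : ∀ t : ℝ, t ^ a * (1 - t) ^ (b+1)
        = t ^ a * (1 - t) ^ b - t ^ (a+1) * (1 - t) ^ b := by
      intro t; ring
    have hi1 : IntervalIntegrable (fun t : ℝ => t ^ a * (1-t) ^ b) volume 0 1 :=
      (Continuous.intervalIntegrable (by fun_prop) _ _)
    have hi2 : IntervalIntegrable (fun t : ℝ => t ^ (a+1) * (1-t) ^ b) volume 0 1 :=
      (Continuous.intervalIntegrable (by fun_prop) _ _)
    rw [show (fun t : ℝ => t ^ a * (1 - t) ^ (b+1)) = fun t =>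
      t ^ a * (1 - t) ^ b - t ^ (a+1) * (1 - t) ^ b from funext hsplit]
    rw [intervalIntegral.integral_sub hi1 hi2, ih a, ih (a+1)]
    have h1 : (((a+1).factorial : ℕ) : ℝ) = ((a:ℝ)+1) * a.factorial := by
      push_cast [Nat.factorial_succ]; ring
    have h2 : (((a+1+b+1).factorial : ℕ) : ℝ) = ((a:ℝ)+(b:ℝ)+2) * (a+b+1).factorial := by
      rw [show a+1+b+1 = (a+b+1)+1 by omega, Nat.factorial_succ]; push_cast; ring
    have h3 : (((a+(b+1)+1).factorial : ℕ) : ℝ) = ((a:ℝ)+(b:ℝ)+2) * (a+b+1).factorial := by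
      rw [show a+(b+1)+1 = (a+b+1)+1 by omega, Nat.factorial_succ]; push_cast; ring
    have h4 : (((b+1).factorial : ℕ) : ℝ) = ((b:ℝ)+1) * b.factorial := by
      push_cast [Nat.factorial_succ]; ring
    rw [h1, h2, h3, h4]
    have hf : (((a+b+1).factorial : ℕ) : ℝ) ≠ 0 := Nat.cast_ne_zero.2 (a+b+1).factorial_pos.ne'
    have hfa : ((a.factorial : ℕ) : ℝ) ≠ 0 := Nat.cast_ne_zero.2 a.factorial_pos.ne'
    have hx1 : (a:ℝ) + 1 ≠ 0 := by positivity
    have hx2 : (a:ℝ) + (b:ℝ) + 2 ≠ 0 := by positivity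
    field_simp
    ring

lemma main_aux (b a : ℕ) :
    ∫ t in (0:ℝ)..1, t ^ a * (1 - t) ^ b * Real.log t
      = ((a.factorial : ℝ) * b.factorial / (a + b + 1).factorial)
        * ((harmonic a : ℝ) - (harmonic (a + b + 1) : ℝ)) := by
  induction b generalizing a with
  | zero =>
    have h1 : ((harmonic (a+0+1) : ℚ) : ℝ) = (harmonic a : ℝ) + 1/((a:ℝ)+1) := by
      rw [show a+0+1 = a+1 from rfl, harmonic_succ]; push_cast; ring
    have h2 : (((a+0+1).factorial : ℕ) : ℝ) = ((a:ℝ)+1) * a.factorial := by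
      rw [show a+0+1 = a+1 from rfl, Nat.factorial_succ]; push_cast; ring
    rw [h1, h2]
    have hfa : ((a.factorial : ℕ) : ℝ) ≠ 0 := Nat.cast_ne_zero.2 a.factorial_pos.ne'
    have hx1 : (a:ℝ) + 1 ≠ 0 := by positivity
    have := int_pow_log a
    simp only [pow_zero, mul_one] at *
    rw [this]
    field_simp
    ring
  | succ b ih =>
    have hsplit : (fun t : ℝ => t ^ a * (1 - t) ^ (b+1) * Real.log t)
        = fun t => t ^ a * (1 - t) ^ b * Real.log t
            - t ^ (a+1) * (1 - t) ^ b * Real.log t := by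
      funext t; ring
    rw [hsplit, intervalIntegral.integral_sub (aux_integrable a b) (aux_integrable (a+1) b),
      ih a, ih (a+1)]
    have e1 : ((harmonic (a+1) : ℚ) : ℝ) = (harmonic a : ℝ) + 1/((a:ℝ)+1) := by
      rw [harmonic_succ]; push_cast; ring
    have e2 : ((harmonic (a+1+b+1) : ℚ) : ℝ)
        = (harmonic (a+b+1) : ℝ) + 1/((a:ℝ)+(b:ℝ)+2) := by
      rw [show a+1+b+1 = (a+b+1)+1 by omega, harmonic_succ]; push_cast; ring
    have e3 : ((harmonic (a+(b+1)+1) : ℚ) : ℝ)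
        = (harmonic (a+b+1) : ℝ) + 1/((a:ℝ)+(b:ℝ)+2) := by
      rw [show a+(b+1)+1 = (a+b+1)+1 by omega, harmonic_succ]; push_cast; ring
    have h1 : (((a+1).factorial : ℕ) : ℝ) = ((a:ℝ)+1) * a.factorial := by
      push_cast [Nat.factorial_succ]; ring
    have h2 : (((a+1+b+1).factorial : ℕ) : ℝ) = ((a:ℝ)+(b:ℝ)+2) * (a+b+1).factorial := by
      rw [show a+1+b+1 = (a+b+1)+1 by omega, Nat.factorial_succ]; push_cast; ring
    have h3 : (((a+(b+1)+1).factorial : ℕ) : ℝ) = ((a:ℝ)+(b:ℝ)+2) * (a+b+1).factorial := by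
      rw [show a+(b+1)+1 = (a+b+1)+1 by omega, Nat.factorial_succ]; push_cast; ring
    have h4 : (((b+1).factorial : ℕ) : ℝ) = ((b:ℝ)+1) * b.factorial := by
      push_cast [Nat.factorial_succ]; ring
    rw [e1, e2, e3, h1, h2, h3, h4]
    have hf : (((a+b+1).factorial : ℕ) : ℝ) ≠ 0 := Nat.cast_ne_zero.2 (a+b+1).factorial_pos.ne'
    have hfa : ((a.factorial : ℕ) : ℝ) ≠ 0 := Nat.cast_ne_zero.2 a.factorial_pos.ne'
    have hfb : ((b.factorial : ℕ) : ℝ) ≠ 0 := Nat.cast_ne_zero.2 b.factorial_pos.ne'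
    have hx1 : (a:ℝ) + 1 ≠ 0 := by positivity
    have hx2 : (a:ℝ) + (b:ℝ) + 2 ≠ 0 := by positivity
    field_simp
    ring

/-- For natural numbers `a`, `b`,
`∫_0^1 t^a (1−t)^b log t dt = B(a+1, b+1) · (H_a − H_{a+b+1})`,
where `B(a+1, b+1) = ∫_0^1 t^a (1−t)^b dt` is the beta function and `H_k` is the `k`-th
harmonic number. -/
theorem beta_log_integral (a b : ℕ) :
    ∫ t in (0 : ℝ)..1, t ^ a * (1 - t) ^ b * Real.log t
      = (∫ t in (0 : ℝ)..1, t ^ a * (1 - t) ^ b)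
        * ((harmonic a : ℝ) - (harmonic (a + b + 1) : ℝ)) := by
  rw [beta_val, main_aux]
end

section
/- Let x ≤ n be natural numbers and consider the weight w(π) = π^x (1−π)^{n−x} on [0,1] (the posterior from x occurrences in n observations under a uniform prior). Then: (i) the posterior mean is π̄ = (∫_0^1 π w(π) dπ)/(∫_0^1 w(π) dπ) = (x+1)/(n+2); and (ii) the posterior expected entropy term is H̄ = (∫_0^1 [π log π + (1−π) log(1−π)] w(π) dπ)/(∫_0^1 w(π) dπ) = ((x+1)/(n+2))(H_{x+1} − H_{n+2}) + ((n−x+1)/(n+2))(H_{n−x+1} − H_{n+2}), where H_k = ∑_{i=1}^k 1/i. -/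
/-!
Write `B(a, b) = ∫₀¹ t^a (1-t)^b`. Since `t^(a+1) (1-t)^(b+1)` vanishes at both ends of `[0,1]`,
integrating its derivative gives `(a+1) B(a, b+1) = (b+1) B(a+1, b)`, and `t + (1-t) = 1` gives
`B(a, b) = B(a+1, b) + B(a, b+1)`; together they give `B(a+1, b) = (a+1)/(a+b+2) · B(a, b)`,
which is the posterior mean.

For the entropy term, `π ↦ 1 - π` turns `(1-π) log(1-π) w(π)` into a term of the same shape as
`π log π w(π)`, so everything reduces to `L(a, b) = ∫₀¹ t^(a+1) (1-t)^b log t`. In the same way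
`t^(a+2) (1-t)^b log t` gives `(a+2) L(a, b) + B(a+1, b) = b L(a+1, b-1)`, and induction on `b`
yields `L(a, b) = B(a+1, b) (H_{a+1} - H_{a+b+2})`; the harmonic numbers enter only through
`(a+2)(H_{a+2} - H_{a+1}) = 1`.
-/

open intervalIntegral

section
open Real

lemma integral_zero_one_comp_one_sub (f : ℝ → ℝ) :
    ∫ t in (0 : ℝ)..1, f (1 - t) = ∫ t in (0 : ℝ)..1, f t := by
  simp [integral_comp_sub_left f (1 : ℝ) (a := 0) (b := 1)]

lemma integral_pow_mul_one_sub_pow_comm (a b : ℕ) :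
    ∫ t in (0 : ℝ)..1, t ^ a * (1 - t) ^ b = ∫ t in (0 : ℝ)..1, t ^ b * (1 - t) ^ a := by
  rw [← integral_zero_one_comp_one_sub]
  simp only [sub_sub_cancel, mul_comm]

lemma integral_pow_mul_one_sub_pow_pos (a b : ℕ) :
    0 < ∫ t in (0 : ℝ)..1, t ^ a * (1 - t) ^ b :=
  intervalIntegral_pos_of_pos_on ((by fun_prop : Continuous _).intervalIntegrable _ _)
    (fun _ ht => mul_pos (pow_pos ht.1 _) (pow_pos (sub_pos.2 ht.2) _)) zero_lt_one

lemma integral_pow_mul_one_sub_pow_eq_add (a b : ℕ) :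
    ∫ t in (0 : ℝ)..1, t ^ a * (1 - t) ^ b
      = (∫ t in (0 : ℝ)..1, t ^ (a + 1) * (1 - t) ^ b)
        + ∫ t in (0 : ℝ)..1, t ^ a * (1 - t) ^ (b + 1) := by
  rw [← integral_add ((by fun_prop : Continuous _).intervalIntegrable _ _)
    ((by fun_prop : Continuous _).intervalIntegrable _ _)]
  congr 1 with t
  ring

lemma succ_mul_integral_pow_mul_one_sub_pow_succ (a b : ℕ) :
    (a + 1 : ℝ) * ∫ t in (0 : ℝ)..1, t ^ a * (1 - t) ^ (b + 1)
      = (b + 1 : ℝ) * ∫ t in (0 : ℝ)..1, t ^ (a + 1) * (1 - t) ^ b := by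
  have hderiv (t : ℝ) : HasDerivAt (fun t => t ^ (a + 1) * (1 - t) ^ (b + 1))
      ((a + 1) * (t ^ a * (1 - t) ^ (b + 1)) - (b + 1) * (t ^ (a + 1) * (1 - t) ^ b)) t := by
    have h : HasDerivAt (fun t => t ^ (a + 1) * (1 - t) ^ (b + 1)) _ t :=
      (hasDerivAt_pow (a + 1) t).mul (((hasDerivAt_id' t).const_sub 1).pow (b + 1))
    convert h using 1
    simp only [Nat.cast_add, Nat.cast_one, add_tsub_cancel_right]
    ring
  have hibp := integral_eq_sub_of_hasDerivAt (fun t _ => hderiv t)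
    ((by fun_prop : Continuous _).intervalIntegrable 0 1)
  rw [integral_sub (((by fun_prop : Continuous _).intervalIntegrable _ _).const_mul _)
    (((by fun_prop : Continuous _).intervalIntegrable _ _).const_mul _),
    integral_const_mul, integral_const_mul] at hibp
  simp only [one_pow, zero_pow (Nat.succ_ne_zero _), sub_self, mul_zero, zero_mul] at hibp
  linarith

lemma integral_pow_succ_mul_one_sub_pow (a b : ℕ) :
    ∫ t in (0 : ℝ)..1, t ^ (a + 1) * (1 - t) ^ b
      = (a + 1) / (a + b + 2) * ∫ t in (0 : ℝ)..1, t ^ a * (1 - t) ^ b := by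
  have hsplit := integral_pow_mul_one_sub_pow_eq_add a b
  have hrec := succ_mul_integral_pow_mul_one_sub_pow_succ a b
  rw [div_mul_eq_mul_div, eq_div_iff (by positivity)]
  linear_combination -(a + 1 : ℝ) * hsplit - hrec

lemma continuous_pow_succ_mul_one_sub_pow_mul_log (k j : ℕ) :
    Continuous fun t : ℝ => t ^ (k + 1) * (1 - t) ^ j * log t := by
  simp_rw [pow_succ, mul_right_comm _ ((1 - _ : ℝ) ^ j), mul_assoc _ _ (log _)]
  have := continuous_mul_log
  fun_prop

/-- For `b = 0` the right-hand side vanishes, so the truncated `b - 1` is harmless. -/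
lemma add_two_mul_integral_pow_mul_one_sub_pow_mul_log (a b : ℕ) :
    (a + 2 : ℝ) * (∫ t in (0 : ℝ)..1, t ^ (a + 1) * (1 - t) ^ b * log t)
        + ∫ t in (0 : ℝ)..1, t ^ (a + 1) * (1 - t) ^ b
      = b * ∫ t in (0 : ℝ)..1, t ^ (a + 2) * (1 - t) ^ (b - 1) * log t := by
  have hcont := continuous_pow_succ_mul_one_sub_pow_mul_log
  have hint (k j : ℕ) := (hcont k j).intervalIntegrable (μ := MeasureTheory.volume) 0 1
  have hderiv (t : ℝ) (ht : t ≠ 0) : HasDerivAt (fun t => t ^ (a + 2) * (1 - t) ^ b * log t)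
      ((a + 2) * (t ^ (a + 1) * (1 - t) ^ b * log t)
        - b * (t ^ (a + 2) * (1 - t) ^ (b - 1) * log t) + t ^ (a + 1) * (1 - t) ^ b) t := by
    have h : HasDerivAt (fun t => t ^ (a + 2) * (1 - t) ^ b * log t) _ t :=
      ((hasDerivAt_pow (a + 2) t).mul (((hasDerivAt_id' t).const_sub 1).pow b)).mul
        (hasDerivAt_log ht)
    convert h using 1
    simp only [Pi.mul_apply, Pi.pow_apply, show a + 2 - 1 = a + 1 by omega]
    field_simp
    push_cast
    ring
  have hibp := integral_eq_sub_of_hasDerivAt_of_le zero_le_one (hcont (a + 1) b).continuousOn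
    (fun t ht => hderiv t ht.1.ne')
    ((((hint a b).const_mul _).sub ((hint (a + 1) (b - 1)).const_mul _)).add
      ((by fun_prop : Continuous fun t : ℝ => t ^ (a + 1) * (1 - t) ^ b).intervalIntegrable _ _))
  rw [integral_add (((hint a b).const_mul _).sub ((hint (a + 1) (b - 1)).const_mul _))
      ((by fun_prop : Continuous fun t : ℝ => t ^ (a + 1) * (1 - t) ^ b).intervalIntegrable _ _),
    integral_sub ((hint a b).const_mul _) ((hint (a + 1) (b - 1)).const_mul _),
    integral_const_mul, integral_const_mul] at hibp
  simp only [one_pow, sub_self, log_one, mul_zero, ne_eq, Nat.add_eq_zero_iff, one_ne_zero,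
    and_false, not_false_eq_true, zero_pow, sub_zero, log_zero] at hibp
  linarith

lemma succ_mul_harmonic_succ_sub_harmonic (n : ℕ) :
    ((n : ℝ) + 1) * (harmonic (n + 1) - harmonic n) = 1 := by
  rw [harmonic_succ]
  push_cast
  field_simp
  ring

lemma integral_pow_mul_one_sub_pow_mul_log (a b : ℕ) :
    ∫ t in (0 : ℝ)..1, t ^ (a + 1) * (1 - t) ^ b * log t
      = (∫ t in (0 : ℝ)..1, t ^ (a + 1) * (1 - t) ^ b)
        * ((harmonic (a + 1) : ℝ) - harmonic (a + b + 2)) := by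
  induction b generalizing a with
  | zero =>
    have hibp := add_two_mul_integral_pow_mul_one_sub_pow_mul_log a 0
    have hH := succ_mul_harmonic_succ_sub_harmonic (a + 1)
    push_cast at hH
    simp only [Nat.cast_zero, zero_mul] at hibp
    apply mul_left_cancel₀ (by positivity : (a : ℝ) + 2 ≠ 0)
    linear_combination hibp + (∫ t in (0 : ℝ)..1, t ^ (a + 1) * (1 - t) ^ 0) * hH
  | succ b ih =>
    have hibp := add_two_mul_integral_pow_mul_one_sub_pow_mul_log a (b + 1)
    have hrec := succ_mul_integral_pow_mul_one_sub_pow_succ (a + 1) b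
    have hH := succ_mul_harmonic_succ_sub_harmonic (a + 1)
    push_cast at hH
    rw [Nat.add_sub_cancel, ih (a + 1), show a + 1 + b + 2 = a + (b + 1) + 2 by omega] at hibp
    push_cast at hibp hrec
    apply mul_left_cancel₀ (by positivity : (a : ℝ) + 2 ≠ 0)
    linear_combination hibp - ((harmonic (a + 2) : ℝ) - harmonic (a + (b + 1) + 2)) * hrec
      + (∫ t in (0 : ℝ)..1, t ^ (a + 1) * (1 - t) ^ (b + 1)) * hH

lemma integral_entropy_mul_pow_mul_one_sub_pow (a b : ℕ) :
    ∫ t in (0 : ℝ)..1, (t * log t + (1 - t) * log (1 - t)) * (t ^ a * (1 - t) ^ b)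
      = (∫ t in (0 : ℝ)..1, t ^ (a + 1) * (1 - t) ^ b * log t)
        + ∫ t in (0 : ℝ)..1, t ^ (b + 1) * (1 - t) ^ a * log t := by
  have hcont := continuous_pow_succ_mul_one_sub_pow_mul_log
  rw [← integral_zero_one_comp_one_sub (fun t => t ^ (b + 1) * (1 - t) ^ a * log t),
    ← integral_add ((hcont a b).intervalIntegrable _ _)
      (((hcont b a).comp' (continuous_sub_left 1)).intervalIntegrable _ _)]
  congr 1 with t
  simp only [sub_sub_cancel]
  ring
end

/-- For the posterior weight `w(π) = π^x (1−π)^(n−x)` on `[0,1]`: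
(i) the posterior mean is `(x+1)/(n+2)`; (ii) the posterior expectation of
`π log π + (1−π) log(1−π)` is
`((x+1)/(n+2))(H_{x+1} − H_{n+2}) + ((n−x+1)/(n+2))(H_{n−x+1} − H_{n+2})`. -/
theorem frequency_posterior_mean_and_entropy (x n : ℕ) (hxn : x ≤ n) :
    ((∫ π in (0 : ℝ)..1, π * (π ^ x * (1 - π) ^ (n - x)))
        / (∫ π in (0 : ℝ)..1, π ^ x * (1 - π) ^ (n - x))
      = ((x : ℝ) + 1) / ((n : ℝ) + 2)) ∧
    ((∫ π in (0 : ℝ)..1,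
          (π * Real.log π + (1 - π) * Real.log (1 - π)) * (π ^ x * (1 - π) ^ (n - x)))
        / (∫ π in (0 : ℝ)..1, π ^ x * (1 - π) ^ (n - x))
      = (((x : ℝ) + 1) / ((n : ℝ) + 2))
          * ((harmonic (x + 1) : ℝ) - (harmonic (n + 2) : ℝ))
        + (((n : ℝ) - (x : ℝ) + 1) / ((n : ℝ) + 2))
          * ((harmonic (n - x + 1) : ℝ) - (harmonic (n + 2) : ℝ))) := by
  obtain ⟨m, rfl⟩ := Nat.exists_eq_add_of_le hxn
  rw [Nat.add_sub_cancel_left]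
  have hpos := integral_pow_mul_one_sub_pow_pos x m
  have hshift_x := integral_pow_succ_mul_one_sub_pow x m
  have hshift_m := integral_pow_succ_mul_one_sub_pow m x
  rw [integral_pow_mul_one_sub_pow_comm m x] at hshift_m
  have hmean : (∫ π in (0 : ℝ)..1, π * (π ^ x * (1 - π) ^ m))
      = ∫ t in (0 : ℝ)..1, t ^ (x + 1) * (1 - t) ^ m := by
    congr 1 with t
    ring
  rw [integral_entropy_mul_pow_mul_one_sub_pow, hmean, integral_pow_mul_one_sub_pow_mul_log,
    integral_pow_mul_one_sub_pow_mul_log, hshift_x, hshift_m, add_comm m x]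
  push_cast
  constructor
  · field_simp
  · field_simp
    ring
end

section
/- Let x ≤ n be natural numbers, π̄ = (x+1)/(n+2), H̄ = ((x+1)/(n+2))(H_{x+1} − H_{n+2}) + ((n−x+1)/(n+2))(H_{n−x+1} − H_{n+2}), and ψ = ((x+1)/(n+2)) H_{x+1} + ((n−x+1)/(n+2)) H_{n−x+1} − H_{n+2}, where H_k = ∑_{i=1}^k 1/i. Then the unique pair (q, q') with q, q' > 0 minimizing q + q' subject to π̄ log(q) + (1−π̄) log(q') = H̄ is given in closed form by q = ((x+1)/(n−x+1))^{(n−x+1)/(n+2)} e^ψ and q' = ((n−x+1)/(x+1))^{(x+1)/(n+2)} e^ψ. -/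
/-!
Writing `a = π̄` and `b = 1 - π̄`, the claimed optimum `(p, p')` satisfies the Lagrange condition
`b p = a p'`, i.e. `p = a (p + p')`, and meets the constraint because `H̄ = ψ`. For any admissible
`(q, q')` the tangent-line bound `p log (q / p) ≤ q - p` (that is, `log t ≤ t - 1`) and its
analogue for `q'` add up to `p + p' ≤ q + q'`, since the Lagrange condition turns the constraint
into `p log (q / p) + p' log (q' / p') = 0`; the bound is strict unless `q = p`.
-/

open Real

theorem mul_log_div_le_sub {p q : ℝ} (hp : 0 < p) (hq : 0 < q) : p * log (q / p) ≤ q - p := by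
  have h := mul_le_mul_of_nonneg_left (log_le_sub_one_of_pos (div_pos hq hp)) hp.le
  rwa [mul_sub, mul_div_cancel₀ _ hp.ne', mul_one] at h

theorem mul_log_div_lt_sub {p q : ℝ} (hp : 0 < p) (hq : 0 < q) (hne : q ≠ p) :
    p * log (q / p) < q - p := by
  have h := mul_lt_mul_of_pos_left (log_lt_sub_one_of_pos (div_pos hq hp) (div_ne_one_of_ne hne)) hp
  rwa [mul_sub, mul_div_cancel₀ _ hp.ne', mul_one] at h

theorem le_add_and_eq_iff_of_weighted_log_eq {a b p p' q q' : ℝ} (hab : a + b = 1)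
    (hp : 0 < p) (hp' : 0 < p') (hopt : p = a * (p + p')) (hq : 0 < q) (hq' : 0 < q')
    (hcon : a * log q + b * log q' = a * log p + b * log p') :
    p + p' ≤ q + q' ∧ (q + q' = p + p' ↔ q = p ∧ q' = p') := by
  have hopt' : p' = b * (p + p') := by linear_combination -hopt - (p + p') * hab
  have hbalance : p * log (q / p) + p' * log (q' / p') = 0 := by
    rw [log_div hq.ne' hp.ne', log_div hq'.ne' hp'.ne']
    linear_combination (p + p') * hcon + (log q - log p) * hopt + (log q' - log p') * hopt'
  have htangent := mul_log_div_le_sub hp hq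
  have htangent' := mul_log_div_le_sub hp' hq'
  refine ⟨by linarith, fun hsum => ?_, fun ⟨hqp, hqp'⟩ => by rw [hqp, hqp']⟩
  by_contra hne
  rcases not_and_or.1 hne with hne | hne
  · linarith [mul_log_div_lt_sub hp hq hne]
  · linarith [mul_log_div_lt_sub hp' hq' hne]

theorem weighted_log_rpow_mul_exp {a b : ℝ} (ha : 0 < a) (hb : 0 < b) (hab : a + b = 1)
    (c : ℝ) : a * log ((a / b) ^ b * exp c) + b * log ((b / a) ^ a * exp c) = c := by
  rw [log_mul (rpow_pos_of_pos (div_pos ha hb) _).ne' (exp_ne_zero _),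
    log_mul (rpow_pos_of_pos (div_pos hb ha) _).ne' (exp_ne_zero _),
    log_rpow (div_pos ha hb), log_rpow (div_pos hb ha), log_exp,
    log_div ha.ne' hb.ne', log_div hb.ne' ha.ne']
  linear_combination c * hab

theorem rpow_mul_exp_eq_mul_add {a b : ℝ} (ha : 0 < a) (hb : 0 < b) (hab : a + b = 1) (c : ℝ) :
    (a / b) ^ b * exp c = a * ((a / b) ^ b * exp c + (b / a) ^ a * exp c) := by
  have hlagrange : b * ((a / b) ^ b * exp c) = a * ((b / a) ^ a * exp c) :=
    calc b * ((a / b) ^ b * exp c) = exp (log b + (log a - log b) * b + c) := by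
          rw [exp_add, exp_add, exp_log hb, rpow_def_of_pos (div_pos ha hb), log_div ha.ne' hb.ne']
          ring
      _ = exp (log a + (log b - log a) * a + c) := by
          congr 1; linear_combination (log a - log b) * hab
      _ = a * ((b / a) ^ a * exp c) := by
          rw [exp_add, exp_add, exp_log ha, rpow_def_of_pos (div_pos hb ha), log_div hb.ne' ha.ne']
          ring
  linear_combination hlagrange - (a / b) ^ b * exp c * hab

/-- In the frequency model with logarithmic utility, with
`π̄ = (x+1)/(n+2)`,
`H̄ = ((x+1)/(n+2))(H_{x+1} − H_{n+2}) + ((n−x+1)/(n+2))(H_{n−x+1} − H_{n+2})` and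
`ψ = ((x+1)/(n+2)) H_{x+1} + ((n−x+1)/(n+2)) H_{n−x+1} − H_{n+2}`,
the unique pair `(q, q')` of positive odds minimizing `q + q'` subject to
`π̄ log q + (1−π̄) log q' = H̄` is
`q = ((x+1)/(n−x+1))^((n−x+1)/(n+2)) e^ψ`, `q' = ((n−x+1)/(x+1))^((x+1)/(n+2)) e^ψ`. -/
theorem frequency_log_utility_closed_form (x n : ℕ) (hxn : x ≤ n)
    (πbar Hbar ψ : ℝ)
    (hπbar : πbar = ((x : ℝ) + 1) / ((n : ℝ) + 2))
    (hHbar : Hbar = (((x : ℝ) + 1) / ((n : ℝ) + 2))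
          * ((harmonic (x + 1) : ℝ) - (harmonic (n + 2) : ℝ))
        + (((n : ℝ) - (x : ℝ) + 1) / ((n : ℝ) + 2))
          * ((harmonic (n - x + 1) : ℝ) - (harmonic (n + 2) : ℝ)))
    (hψ : ψ = (((x : ℝ) + 1) / ((n : ℝ) + 2)) * (harmonic (x + 1) : ℝ)
        + (((n : ℝ) - (x : ℝ) + 1) / ((n : ℝ) + 2)) * (harmonic (n - x + 1) : ℝ)
        - (harmonic (n + 2) : ℝ))
    (qopt qopt' : ℝ)
    (hqopt : qopt = (((x : ℝ) + 1) / ((n : ℝ) - (x : ℝ) + 1))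
        ^ ((((n : ℝ) - (x : ℝ) + 1) / ((n : ℝ) + 2)) : ℝ) * Real.exp ψ)
    (hqopt' : qopt' = (((n : ℝ) - (x : ℝ) + 1) / ((x : ℝ) + 1))
        ^ (((((x : ℝ) + 1) / ((n : ℝ) + 2))) : ℝ) * Real.exp ψ) :
    (0 < qopt ∧ 0 < qopt' ∧
      πbar * Real.log qopt + (1 - πbar) * Real.log qopt' = Hbar) ∧
    (∀ q q' : ℝ, 0 < q → 0 < q' →
      πbar * Real.log q + (1 - πbar) * Real.log q' = Hbar →
      qopt + qopt' ≤ q + q' ∧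
      (q + q' = qopt + qopt' ↔ q = qopt ∧ q' = qopt')) := by
  have hN : (0 : ℝ) < n + 2 := by positivity
  have hB : (0 : ℝ) < n - x + 1 := by linarith [(Nat.cast_le (α := ℝ)).2 hxn]
  set a := ((x : ℝ) + 1) / (n + 2)
  set b := ((n : ℝ) - x + 1) / (n + 2)
  have ha : 0 < a := by positivity
  have hb : 0 < b := div_pos hB hN
  have hab : a + b = 1 := by rw [← add_div, div_eq_one_iff_eq hN.ne']; ring
  have hHbarψ : Hbar = ψ := by
    rw [hHbar, hψ]; linear_combination (-(harmonic (n + 2) : ℝ)) * hab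
  rw [← div_div_div_cancel_right₀ hN.ne' ((x : ℝ) + 1) (n - x + 1)] at hqopt
  rw [← div_div_div_cancel_right₀ hN.ne' ((n : ℝ) - x + 1) (x + 1)] at hqopt'
  subst hπbar hqopt hqopt'
  rw [hHbarψ, show 1 - a = b by linarith]
  refine ⟨⟨by positivity, by positivity, weighted_log_rpow_mul_exp ha hb hab ψ⟩,
    fun q q' hq hq' hcon => le_add_and_eq_iff_of_weighted_log_eq hab (by positivity)
      (by positivity) (rpow_mul_exp_eq_mul_add ha hb hab ψ) hq hq'
      (hcon.trans (weighted_log_rpow_mul_exp ha hb hab ψ).symm)⟩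
end

section
/- Consider the hedged loss mitigation strategies with guaranteed (event-independent) outcomes: no action yields −qL; action yields −qM − (1−q)C when C < M, and −(1−q')M − q'C when M < C (odds q, q' > 0). Then: (i) if 0 < C < M < L, the action strategy yields a strictly smaller guaranteed loss than the no-action strategy if and only if q > C/(L + C − M); (ii) if 0 < M < C < L, the action strategy yields a strictly smaller guaranteed loss than the no-action strategy if and only if qL − (C − M)q' > M. In both cases the decision depends only on the odds q and q' directly, with no normalization of the odds into probabilities. -/
/-- Comparing guaranteed hedged outcomes in loss mitigation:
(i) if `0 < C < M < L`, the action (guaranteed outcome `−qM − (1−q)C`) beats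
no action (guaranteed outcome `−qL`) iff `q > C/(L + C − M)`;
(ii) if `0 < M < C < L`, the action (guaranteed outcome `−(1−q')M − q'C`) beats
no action iff `qL − (C − M)q' > M`. The decision uses the odds `q`, `q'` directly. -/
theorem loss_mitigation_decision (L M C q q' : ℝ) (hq : 0 < q) (hq' : 0 < q') :
    (0 < C → C < M → M < L →
      (-(q * M) - (1 - q) * C > -(q * L) ↔ q > C / (L + C - M))) ∧
    (0 < M → M < C → C < L →
      (-((1 - q') * M) - q' * C > -(q * L) ↔ q * L - (C - M) * q' > M)) := by
  constructor
  · intro hC hCM hML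
    have hpos : 0 < L + C - M := by linarith
    rw [show (q > C / (L + C - M)) ↔ C / (L+C-M) < q from Iff.rfl, div_lt_iff₀ hpos]
    constructor <;> intro h <;> nlinarith
  · intro hM hMC hCL
    constructor <;> intro h <;> linarith
end
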